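/- Let X₁,…,Xₙ be i.i.d. {0,1}-valued Bernoulli random variables with success probability μₙ, let k(n)→∞ with βₙ := k(n)/n → β ∈ (0,1], and let q : {0,1} → (0,∞) satisfy n·μₙ(x)/k(n) → q(x) for x ∈ {0,1}. Then, as n → ∞, the empirical infection measure P₁^X satisfies a large deviation principle in the space 𝓜({0,1}) with speed n and good rate function β·I^β(ω) where I^β(ω) := H(ω/β ‖ q), i.e. β·I^β(ω) = Σ_{x∈{0,1}} [ ω(x) log( ω(x)/(β q(x)) ) − ω(x) + β q(x) ]. -/

import Mathlib

open Filter

namespace Pooling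

/-- the Bernoulli success-probability vector on `{0,1}`: `bern μ true = μ`, `bern μ false = 1-μ`. -/
def bern (μ : ℝ) : Bool → ℝ := fun x => if x then μ else 1 - μ

/-- probability weight of an i.i.d. Bernoulli(μ) configuration `x : Fin n → Bool`. -/
noncomputable def bernWeight (n : ℕ) (μ : ℝ) (x : Fin n → Bool) : ℝ :=
  ∏ i, bern μ (x i)

/-- the set of integer partitions of `n` into `k` positive parts (as ordered tuples). -/
def partitions (n k : ℕ) : Finset (Fin k → ℕ) :=
  (Fintype.piFinset fun _ : Fin k => Finset.range (n + 1)).filter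
    fun N => (∀ j, 0 < N j) ∧ ∑ j, N j = n

/-- the empirical infection measure `P₁^x` of the sample, as a measure on `{0,1} ≃ Bool`. -/
noncomputable def empInd (n : ℕ) (x : Fin n → Bool) : Bool → ℝ :=
  fun a => (n : ℝ)⁻¹ * ∑ i, if x i = a then 1 else 0

/-- the first index of pool `j`, when the pools have sizes `N 0, N 1, …` in order. -/
def poolStart {k : ℕ} (N : Fin k → ℕ) (j : Fin k) : ℕ :=
  ∑ r ∈ Finset.univ.filter (fun r => r < j), N r

/-- individual `i` belongs to pool `j`. -/
def inPool {n k : ℕ} (N : Fin k → ℕ) (j : Fin k) (i : Fin n) : Prop :=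
  poolStart N j ≤ (i : ℕ) ∧ (i : ℕ) < poolStart N j + N j

instance {n k : ℕ} (N : Fin k → ℕ) (j : Fin k) (i : Fin n) : Decidable (inPool N j i) :=
  inferInstanceAs (Decidable (_ ∧ _))

/-- the empirical measure `L_j` of pool `j`. -/
noncomputable def poolMeas {n k : ℕ} (x : Fin n → Bool) (N : Fin k → ℕ) (j : Fin k) :
    Bool → ℝ :=
  fun a => (N j : ℝ)⁻¹ * ∑ i, if inPool N j i ∧ x i = a then 1 else 0

open Classical in
/-- the empirical pool infection measure `P₂^{x,N}`, a measure on `ℕ × 𝓝({0,1})`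
(measures on `{0,1}` being represented as functions `Bool → ℝ`);
note `1/(n βₙ) = 1/k(n)`. -/
noncomputable def empPool {n k : ℕ} (x : Fin n → Bool) (N : Fin k → ℕ) :
    ℕ × (Bool → ℝ) → ℝ :=
  fun p => (k : ℝ)⁻¹ * ∑ j, if (N j, poolMeas x N j) = p then 1 else 0

/-- probability of the event `E` under the pooled-sample law `Pₙ`:
`X` is i.i.d. Bernoulli(μ) and, independently, `N` is uniform on the integer partitions of
`n` into `k` positive parts (this is exactly the law conditioned on all `N j ≠ 0` and
`N 0 + ⋯ + N (k-1) = n`). -/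
noncomputable def poolProb (n k : ℕ) (μ : ℝ)
    (E : Set ((Fin n → Bool) × (Fin k → ℕ))) : ℝ :=
  ((partitions n k).card : ℝ)⁻¹ *
    ∑ N ∈ partitions n k, ∑ x : Fin n → Bool,
      E.indicator (fun _ => bernWeight n μ x) (x, N)

/-- conditional probability `Pₙ(E ∣ C)` under the pooled-sample law. -/
noncomputable def condProb (n k : ℕ) (μ : ℝ)
    (E C : Set ((Fin n → Bool) × (Fin k → ℕ))) : ℝ :=
  poolProb n k μ (E ∩ C) / poolProb n k μ C

/-- extended-real logarithm, `elog 0 = ⊥`. -/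
noncomputable def elog (r : ℝ) : EReal := if r ≤ 0 then ⊥ else ((Real.log r : ℝ) : EReal)

/-- `P` (a sequence of laws, given by their values on all subsets of `𝒳`) satisfies a
large deviation principle with speed `n` and good rate function `J`. -/
def IsLDP {𝒳 : Type*} [TopologicalSpace 𝒳] (P : ℕ → Set 𝒳 → ℝ) (J : 𝒳 → EReal) : Prop :=
  LowerSemicontinuous J ∧
  (∀ c : ℝ, IsCompact {x | J x ≤ (c : EReal)}) ∧
  (∀ F : Set 𝒳, IsClosed F →
    Filter.limsup (fun n : ℕ => (((n : ℝ)⁻¹ : ℝ) : EReal) * elog (P n F)) Filter.atTop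
      ≤ -(⨅ x ∈ F, J x)) ∧
  (∀ G : Set 𝒳, IsOpen G →
    -(⨅ x ∈ G, J x) ≤
      Filter.liminf (fun n : ℕ => (((n : ℝ)⁻¹ : ℝ) : EReal) * elog (P n G)) Filter.atTop)

/-- `ω : Bool → ℝ` is a probability vector on `{0,1}`, i.e. an element of `𝓜({0,1})`. -/
def IsProbVec (ω : Bool → ℝ) : Prop := (∀ a, 0 ≤ ω a) ∧ ω false + ω true = 1

/-- `π` is (the mass function of) a probability measure on `ℕ × 𝓝({0,1})`, respecting the
convention that `ℓ = (0,0)` iff `m = 0`; i.e. an element of `𝓜(ℕ × 𝓝({0,1}))`. -/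
def IsPoolLaw (π : ℕ × (Bool → ℝ) → ℝ) : Prop :=
  (∀ p, 0 ≤ π p) ∧ HasSum π 1 ∧
    ∀ m ℓ, π (m, ℓ) ≠ 0 → ((m = 0 ∧ ℓ = fun _ => (0 : ℝ)) ∨ (m ≠ 0 ∧ IsProbVec ℓ))

/-- relative entropy `H(π ∥ φ)` of (discrete) probability measures. -/
noncomputable def relEnt {α : Type*} (π φ : α → ℝ) : ℝ :=
  ∑' a, π a * Real.log (π a / φ a)

/-- relative entropy `H(μ ∥ ν) = Σ_x [μ x log (μ x / ν x) - μ x + ν x]` of finite measures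
on `{0,1}`. -/
noncomputable def relEntFin (μ ν : Bool → ℝ) : ℝ :=
  ∑ a : Bool, (μ a * Real.log (μ a / ν a) - μ a + ν a)

/-- the measure `Φ_β^ω` on `ℕ × 𝓝({0,1})`:
`Φ_β^ω(m,ℓ) = (1 - e^{-1/β})⁻¹ ∏_x (ω x/β)^{m ℓ x} e^{-ω x/β} / (m ℓ x)!`
(with real powers and `Γ(z+1)` extending the factorial). -/
noncomputable def Phi (β : ℝ) (ω : Bool → ℝ) : ℕ × (Bool → ℝ) → ℝ :=
  fun p => (1 - Real.exp (-(1 / β)))⁻¹ *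
    ∏ a : Bool,
      (ω a / β) ^ ((p.1 : ℝ) * p.2 a) * Real.exp (-(ω a / β)) /
        Real.Gamma ((p.1 : ℝ) * p.2 a + 1)

/-- `⟨π⟩(a) = Σ_{(m,ℓ)} m ℓ(a) π(m,ℓ)`. -/
noncomputable def bracket (π : ℕ × (Bool → ℝ) → ℝ) : Bool → ℝ :=
  fun a => ∑' p : ℕ × (Bool → ℝ), (p.1 : ℝ) * p.2 a * π p


open Classical in
/-- the rate function of Theorem 2.4:
`β I^β(ω) = β H(ω/β ∥ q) = Σ_x [ω x log(ω x/(β q x)) - ω x + β q x]`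
(extended by `∞` off `𝓜({0,1})`). -/
noncomputable def rate3 (β : ℝ) (q : Bool → ℝ) (ω : Bool → ℝ) : EReal :=
  if IsProbVec ω then
    ((∑ a : Bool, (ω a * Real.log (ω a / (β * q a)) - ω a + β * q a) : ℝ) : EReal)
  else ⊤

/-!
The law of `P₁^X` only sees the number `s` of infected individuals, which is
Binomial(`n`, `μₙ`), and `P₁^X = (1 - s/n, s/n)`. By the method of types,
`C(n,s) μ^s (1-μ)^(n-s) = e^{-n H(s/n ‖ μ)}` up to a factor in `[1/(n+1), 1]`: the factor is
`C(n,s) (s/n)^s (1-s/n)^(n-s)`, the largest of the `n + 1` terms of the binomial expansion of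
`(s/n + (1 - s/n))^n = 1`. The hypotheses force `μₙ → p := β q(1)` and `β q(0) = 1 - p`, so the
rate `β I^β(ω)` is the binary relative entropy `H(ω ‖ Bern p)`, and `H(t ‖ μₙ) → H(t ‖ p)`
uniformly in `t`. The upper bound then follows by summing over the at most `n + 1` types, and
the lower bound from the single type `⌊t n⌋ / n → t`.
-/

open Real Finset Topology

section Counting

variable {α : Type*} [Fintype α] [DecidableEq α]

def trueSetEquiv : (α → Bool) ≃ Finset α where
  toFun x := univ.filter fun i => x i = true
  invFun S i := decide (i ∈ S)
  left_inv x := by funext i; simp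
  right_inv S := by ext i; simp

theorem sum_fun_bool_apply_card {β : Type*} [AddCommMonoid β] (f : ℕ → β) :
    ∑ x : α → Bool, f #{i | x i = true} =
      ∑ m ∈ range (Fintype.card α + 1), (Fintype.card α).choose m • f m := by
  rw [← card_univ, ← sum_powerset_apply_card, powerset_univ]
  exact Fintype.sum_equiv trueSetEquiv _ _ fun _ => rfl

theorem card_filter_true_add_card_filter_false {n : ℕ} (x : Fin n → Bool) :
    #{i | x i = true} + #{i | x i = false} = n := by
  simpa using card_filter_add_card_filter_not (s := (univ : Finset (Fin n))) (x · = true)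

theorem empInd_eq_bern {n : ℕ} (hn : n ≠ 0) (x : Fin n → Bool) :
    empInd n x = bern (#{i | x i = true} / n) := by
  have hcard : (#{i | x i = true} : ℝ) + #{i | x i = false} = n := by
    exact_mod_cast card_filter_true_add_card_filter_false x
  funext a
  cases a <;> simp only [empInd, bern, sum_boole, Bool.false_eq_true, ↓reduceIte] <;> field_simp
  linarith

theorem bernWeight_eq {n : ℕ} (μ : ℝ) (x : Fin n → Bool) :
    bernWeight n μ x = μ ^ #{i | x i = true} * (1 - μ) ^ (n - #{i | x i = true}) := by
  have hfalse : n - #{i | x i = true} = #{i | x i = false} := by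
    have := card_filter_true_add_card_filter_false x
    omega
  rw [hfalse]
  simp [bernWeight, bern, prod_ite]

noncomputable def empIndProb (μ : ℝ) (n : ℕ) (A : Set (Bool → ℝ)) : ℝ :=
  ∑ x : Fin n → Bool, A.indicator (fun _ => bernWeight n μ x) (empInd n x)

def binomProb (μ : ℝ) (n s : ℕ) : ℝ := n.choose s * μ ^ s * (1 - μ) ^ (n - s)

theorem empIndProb_eq_sum_binomProb {n : ℕ} (hn : n ≠ 0) (μ : ℝ) (A : Set (Bool → ℝ)) :
    empIndProb μ n A =
      ∑ s ∈ range (n + 1), A.indicator (fun _ => binomProb μ n s) (bern (s / n)) := by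
  simp_rw [empIndProb, empInd_eq_bern hn, bernWeight_eq]
  rw [sum_fun_bool_apply_card fun s => A.indicator (fun _ => μ ^ s * (1 - μ) ^ (n - s))
    (bern (s / n)), Fintype.card_fin]
  refine sum_congr rfl fun s _ => ?_
  by_cases hs : bern (s / n) ∈ A <;> simp [hs, binomProb, mul_assoc]

end Counting

section BinomialTypes

theorem pow_eq_sum_choose_mul_pow_mul_pow {n s : ℕ} (hs : s ≤ n) :
    n ^ n = ∑ j ∈ range (n + 1), n.choose j * s ^ j * (n - s) ^ (n - j) := by
  rw [sum_congr rfl fun j _ => mul_rotate (n.choose j) (s ^ j) ((n - s) ^ (n - j))]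
  simpa [Nat.add_sub_cancel' hs] using add_pow s (n - s) n

theorem choose_mul_pow_mul_pow_le_pow {n s : ℕ} (hs : s ≤ n) :
    n.choose s * s ^ s * (n - s) ^ (n - s) ≤ n ^ n := by
  rw [pow_eq_sum_choose_mul_pow_mul_pow hs]
  exact single_le_sum (f := fun j => n.choose j * s ^ j * (n - s) ^ (n - j))
    (fun _ _ => Nat.zero_le _) (mem_range.mpr (Nat.lt_succ_of_le hs))

theorem choose_mul_pow_mul_pow_le_succ {n s j : ℕ} (hs : s ≤ n) (hj : j < s) :
    n.choose j * s ^ j * (n - s) ^ (n - j) ≤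
      n.choose (j + 1) * s ^ (j + 1) * (n - s) ^ (n - (j + 1)) := by
  have hnj : n - j = n - (j + 1) + 1 := by omega
  have key : n.choose j * (n - s) ≤ n.choose (j + 1) * s := by
    refine Nat.le_of_mul_le_mul_right ?_ (Nat.succ_pos j)
    calc n.choose j * (n - s) * (j + 1) = n.choose j * ((n - s) * (j + 1)) := by ring
      _ ≤ n.choose j * ((n - j) * s) :=
          Nat.mul_le_mul_left _ (Nat.mul_le_mul (by omega) (by omega))
      _ = n.choose (j + 1) * s * (j + 1) := by
          rw [← mul_assoc, ← Nat.choose_succ_right_eq]; ring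
  calc n.choose j * s ^ j * (n - s) ^ (n - j)
      = n.choose j * (n - s) * (s ^ j * (n - s) ^ (n - (j + 1))) := by rw [hnj]; ring
    _ ≤ n.choose (j + 1) * s * (s ^ j * (n - s) ^ (n - (j + 1))) := Nat.mul_le_mul_right _ key
    _ = n.choose (j + 1) * s ^ (j + 1) * (n - s) ^ (n - (j + 1)) := by ring

theorem choose_succ_mul_pow_mul_pow_le {n s j : ℕ} (hs : s ≤ j) (hj : j < n) :
    n.choose (j + 1) * s ^ (j + 1) * (n - s) ^ (n - (j + 1)) ≤
      n.choose j * s ^ j * (n - s) ^ (n - j) := by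
  have hnj : n - j = n - (j + 1) + 1 := by omega
  have key : n.choose (j + 1) * s ≤ n.choose j * (n - s) := by
    refine Nat.le_of_mul_le_mul_right ?_ (Nat.succ_pos j)
    calc n.choose (j + 1) * s * (j + 1) = n.choose j * ((n - j) * s) := by
          rw [← mul_assoc, ← Nat.choose_succ_right_eq]; ring
      _ ≤ n.choose j * ((n - s) * (j + 1)) :=
          Nat.mul_le_mul_left _ (Nat.mul_le_mul (by omega) (by omega))
      _ = n.choose j * (n - s) * (j + 1) := by ring
  calc n.choose (j + 1) * s ^ (j + 1) * (n - s) ^ (n - (j + 1))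
      = n.choose (j + 1) * s * (s ^ j * (n - s) ^ (n - (j + 1))) := by ring
    _ ≤ n.choose j * (n - s) * (s ^ j * (n - s) ^ (n - (j + 1))) := Nat.mul_le_mul_right _ key
    _ = n.choose j * s ^ j * (n - s) ^ (n - j) := by rw [hnj]; ring

/-- Up to the factor `n ^ n`, these are the Binomial(`n`, `s / n`) weights, whose mode is `s`. -/
theorem choose_mul_pow_mul_pow_le_at_mode {n s j : ℕ} (hs : s ≤ n) (hj : j ≤ n) :
    n.choose j * s ^ j * (n - s) ^ (n - j) ≤ n.choose s * s ^ s * (n - s) ^ (n - s) := by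
  rcases le_total j s with hjs | hsj
  · clear hj
    induction hjs using Nat.decreasingInduction with
    | self => rfl
    | of_succ j hjs ih => exact (choose_mul_pow_mul_pow_le_succ hs hjs).trans ih
  · induction j, hsj using Nat.le_induction with
    | base => rfl
    | succ j hsj ih => exact (choose_succ_mul_pow_mul_pow_le hsj hj).trans (ih (by omega))

theorem pow_le_succ_mul_choose_mul_pow_mul_pow {n s : ℕ} (hs : s ≤ n) :
    n ^ n ≤ (n + 1) * (n.choose s * s ^ s * (n - s) ^ (n - s)) := by
  calc n ^ n = ∑ j ∈ range (n + 1), n.choose j * s ^ j * (n - s) ^ (n - j) :=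
        pow_eq_sum_choose_mul_pow_mul_pow hs
    _ ≤ ∑ _j ∈ range (n + 1), n.choose s * s ^ s * (n - s) ^ (n - s) :=
        sum_le_sum fun j hj =>
          choose_mul_pow_mul_pow_le_at_mode hs (Nat.lt_succ_iff.mp (mem_range.mp hj))
    _ = (n + 1) * (n.choose s * s ^ s * (n - s) ^ (n - s)) := by
        rw [sum_const, card_range, smul_eq_mul]

theorem choose_mul_pow_mul_pow_pos (s r : ℕ) : 0 < (s + r).choose s * s ^ s * r ^ r :=
  Nat.mul_pos (Nat.mul_pos (Nat.choose_pos (Nat.le_add_right s r)) Nat.pow_self_pos)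
    Nat.pow_self_pos

theorem log_choose_mul_pow_mul_pow (s r : ℕ) :
    log (((s + r).choose s * s ^ s * r ^ r : ℕ) : ℝ) =
      log ((s + r).choose s) + s * log s + r * log r := by
  have hc : ((s + r).choose s : ℝ) ≠ 0 := by exact_mod_cast (Nat.choose_pos (by omega)).ne'
  have hs : ((s ^ s : ℕ) : ℝ) ≠ 0 := by exact_mod_cast Nat.pow_self_pos.ne'
  have hr : ((r ^ r : ℕ) : ℝ) ≠ 0 := by exact_mod_cast Nat.pow_self_pos.ne'
  push_cast at hs hr ⊢
  rw [log_mul (mul_ne_zero hc hs) hr, log_mul hc hs, log_pow, log_pow]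

theorem log_choose_add_le (s r : ℕ) :
    log ((s + r).choose s) + s * log s + r * log r ≤ (s + r : ℕ) * log (s + r : ℕ) := by
  rw [← log_choose_mul_pow_mul_pow, ← log_pow]
  refine log_le_log (by exact_mod_cast choose_mul_pow_mul_pow_pos s r) ?_
  have := choose_mul_pow_mul_pow_le_pow (Nat.le_add_right s r)
  rw [Nat.add_sub_cancel_left] at this
  exact_mod_cast this

theorem le_log_choose_add (s r : ℕ) :
    (s + r : ℕ) * log (s + r : ℕ) - log ((s + r : ℕ) + 1) ≤
      log ((s + r).choose s) + s * log s + r * log r := by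
  rw [← log_choose_mul_pow_mul_pow, ← log_pow, sub_le_iff_le_add',
    ← log_mul (by positivity) (by exact_mod_cast (choose_mul_pow_mul_pow_pos s r).ne')]
  refine log_le_log (by exact_mod_cast Nat.pow_self_pos) ?_
  have := pow_le_succ_mul_choose_mul_pow_mul_pow (Nat.le_add_right s r)
  rw [Nat.add_sub_cancel_left] at this
  exact_mod_cast this

end BinomialTypes

section BernoulliEntropy

/-- `H(Bern t ‖ Bern p)`, written without quotients so that it is continuous in `t`. -/
noncomputable def bernKL (p t : ℝ) : ℝ :=
  t * log t + (1 - t) * log (1 - t) - t * log p - (1 - t) * log (1 - p)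

theorem continuous_bernKL (p : ℝ) : Continuous (bernKL p) := by
  unfold bernKL; fun_prop

theorem mul_log_div (x : ℝ) {y : ℝ} (hy : y ≠ 0) :
    x * log (x / y) = x * log x - x * log y := by
  rcases eq_or_ne x 0 with rfl | hx
  · simp
  · rw [log_div hx hy, mul_sub]

theorem mul_bernKL_div (μ : ℝ) {s r : ℕ} (h : s + r ≠ 0) :
    ((s + r : ℕ) : ℝ) * bernKL μ (s / (s + r : ℕ)) =
      s * log s + r * log r - (s + r : ℕ) * log (s + r : ℕ) - s * log μ - r * log (1 - μ) := by
  have hn : ((s + r : ℕ) : ℝ) ≠ 0 := by exact_mod_cast h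
  have hsub : 1 - (s : ℝ) / (s + r : ℕ) = r / (s + r : ℕ) := by field_simp; push_cast; ring
  simp only [bernKL, hsub, div_mul_eq_mul_div, mul_log_div _ hn]
  field_simp
  push_cast
  ring

theorem abs_bernKL_sub_bernKL_le {μ p t : ℝ} (ht : t ∈ Set.Icc 0 1) :
    |bernKL μ t - bernKL p t| ≤ |log μ - log p| + |log (1 - μ) - log (1 - p)| := by
  have hdiff : bernKL μ t - bernKL p t =
      -(t * (log μ - log p)) - (1 - t) * (log (1 - μ) - log (1 - p)) := by
    unfold bernKL; ring
  rw [hdiff]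
  calc _ ≤ t * |log μ - log p| + (1 - t) * |log (1 - μ) - log (1 - p)| := by
        refine (abs_sub _ _).trans ?_
        rw [abs_neg, abs_mul, abs_mul, abs_of_nonneg ht.1, abs_of_nonneg (sub_nonneg.mpr ht.2)]
    _ ≤ _ := by
        nlinarith [mul_nonneg (sub_nonneg.mpr ht.2) (abs_nonneg (log μ - log p)),
          mul_nonneg ht.1 (abs_nonneg (log (1 - μ) - log (1 - p)))]

theorem binomProb_pos {μ : ℝ} (hμ : μ ∈ Set.Ioo 0 1) {n s : ℕ} (hs : s ≤ n) :
    0 < binomProb μ n s := by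
  have := Nat.choose_pos hs
  have := sub_pos.mpr hμ.2
  have := hμ.1
  unfold binomProb
  positivity

theorem log_binomProb {μ : ℝ} (hμ : μ ∈ Set.Ioo 0 1) {n s : ℕ} (hs : s ≤ n) :
    log (binomProb μ n s) = log (n.choose s) + s * log μ + (n - s : ℕ) * log (1 - μ) := by
  have hc : (n.choose s : ℝ) ≠ 0 := by exact_mod_cast (Nat.choose_pos hs).ne'
  have h1 : (1 - μ) ≠ 0 := by linarith [hμ.2]
  rw [binomProb, log_mul (mul_ne_zero hc (pow_ne_zero _ hμ.1.ne')) (pow_ne_zero _ h1),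
    log_mul hc (pow_ne_zero _ hμ.1.ne'), log_pow, log_pow]

theorem binomProb_le_exp {μ : ℝ} (hμ : μ ∈ Set.Ioo 0 1) {n s : ℕ} (hn : n ≠ 0)
    (hs : s ≤ n) : binomProb μ n s ≤ exp (-(n * bernKL μ (s / n))) := by
  obtain ⟨r, rfl⟩ := Nat.exists_eq_add_of_le hs
  rw [← log_le_iff_le_exp (binomProb_pos hμ hs), log_binomProb hμ hs, mul_bernKL_div μ hn,
    Nat.add_sub_cancel_left]
  linarith [log_choose_add_le s r]

theorem exp_le_binomProb {μ : ℝ} (hμ : μ ∈ Set.Ioo 0 1) {n s : ℕ} (hn : n ≠ 0)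
    (hs : s ≤ n) : exp (-(n * bernKL μ (s / n)) - log (n + 1)) ≤ binomProb μ n s := by
  obtain ⟨r, rfl⟩ := Nat.exists_eq_add_of_le hs
  rw [← le_log_iff_exp_le (binomProb_pos hμ hs), log_binomProb hμ hs, mul_bernKL_div μ hn,
    Nat.add_sub_cancel_left]
  linarith [le_log_choose_add s r]

end BernoulliEntropy

section RateFunction

theorem continuous_bern : Continuous bern :=
  continuous_pi fun a => by
    cases a <;> simp only [bern, Bool.false_eq_true, ↓reduceIte] <;> fun_prop

theorem bern_injective : Function.Injective bern := fun _ _ h => congrFun h true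

theorem isProbVec_iff_exists_bern {ω : Bool → ℝ} :
    IsProbVec ω ↔ ∃ t ∈ Set.Icc (0 : ℝ) 1, bern t = ω := by
  constructor
  · rintro ⟨hnonneg, hsum⟩
    refine ⟨ω true, ⟨hnonneg true, by linarith [hnonneg false]⟩, funext fun a => ?_⟩
    cases a
    · simp only [bern, Bool.false_eq_true, ↓reduceIte]
      linarith
    · rfl
  · rintro ⟨t, ht, rfl⟩
    refine ⟨fun a => ?_, by simp [bern]⟩
    cases a <;> simp only [bern, Bool.false_eq_true, ↓reduceIte]
    exacts [sub_nonneg.mpr ht.2, ht.1]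

theorem relEntFin_bern {p : ℝ} (hp : p ∈ Set.Ioo 0 1) (t : ℝ) :
    relEntFin (bern t) (bern p) = bernKL p t := by
  simp only [relEntFin, Fintype.sum_bool, bern, Bool.false_eq_true, ↓reduceIte,
    mul_log_div _ hp.1.ne', mul_log_div _ (sub_pos.mpr hp.2).ne', bernKL]
  ring

open Classical in
noncomputable def bernRate (p : ℝ) (ω : Bool → ℝ) : EReal :=
  if IsProbVec ω then (relEntFin ω (bern p) : EReal) else ⊤

theorem bernRate_bern {p t : ℝ} (hp : p ∈ Set.Ioo 0 1) (ht : t ∈ Set.Icc 0 1) :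
    bernRate p (bern t) = bernKL p t := by
  rw [bernRate, if_pos (isProbVec_iff_exists_bern.mpr ⟨t, ht, rfl⟩), relEntFin_bern hp]

theorem setOf_bernRate_le {p : ℝ} (hp : p ∈ Set.Ioo 0 1) (c : ℝ) :
    {ω | bernRate p ω ≤ c} = bern '' (Set.Icc 0 1 ∩ bernKL p ⁻¹' Set.Iic c) := by
  ext ω
  by_cases hω : IsProbVec ω
  · obtain ⟨t, ht, rfl⟩ := isProbVec_iff_exists_bern.mp hω
    rw [bern_injective.mem_set_image]
    simp [bernRate_bern hp ht, ht]
  · simp only [Set.mem_ofPred_eq, bernRate, if_neg hω, top_le_iff, EReal.coe_ne_top, false_iff]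
    rintro ⟨t, ht, rfl⟩
    exact hω (isProbVec_iff_exists_bern.mpr ⟨t, ht.1, rfl⟩)

theorem isCompact_setOf_bernRate_le {p : ℝ} (hp : p ∈ Set.Ioo 0 1) (c : ℝ) :
    IsCompact {ω | bernRate p ω ≤ c} := by
  rw [setOf_bernRate_le hp]
  exact (isCompact_Icc.inter_right (isClosed_Iic.preimage (continuous_bernKL p))).image
    continuous_bern

theorem lowerSemicontinuous_of_isClosed_setOf_le {X : Type*} [TopologicalSpace X]
    {f : X → EReal} (hf : ∀ x, f x ≠ ⊥) (h : ∀ c : ℝ, IsClosed {x | f x ≤ c}) :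
    LowerSemicontinuous f := by
  rw [lowerSemicontinuous_iff_isClosed_preimage]
  intro y
  induction y using EReal.rec with
  | bot => simp [Set.preimage, hf]
  | coe c => exact h c
  | top => simp

theorem lowerSemicontinuous_bernRate {p : ℝ} (hp : p ∈ Set.Ioo 0 1) :
    LowerSemicontinuous (bernRate p) :=
  lowerSemicontinuous_of_isClosed_setOf_le (fun ω => by unfold bernRate; split_ifs <;> simp)
    fun c => (isCompact_setOf_bernRate_le hp c).isClosed

end RateFunction

section LogScale

theorem coe_inv_mul_elog_le {c P a : ℝ} (hc : 0 < c) (h : P ≤ exp (c * a)) :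
    ((c⁻¹ : ℝ) : EReal) * elog P ≤ a := by
  unfold elog
  split_ifs with hP
  · rw [EReal.mul_bot_of_pos (by exact_mod_cast inv_pos.mpr hc)]
    exact bot_le
  · rw [← EReal.coe_mul, EReal.coe_le_coe_iff, inv_mul_le_iff₀ hc]
    exact (log_le_iff_le_exp (not_le.mp hP)).mpr h

theorem le_coe_inv_mul_elog {c P a : ℝ} (hc : 0 < c) (h : exp (c * a) ≤ P) :
    (a : EReal) ≤ ((c⁻¹ : ℝ) : EReal) * elog P := by
  have hP : 0 < P := (exp_pos _).trans_le h
  rw [elog, if_neg hP.not_ge, ← EReal.coe_mul, EReal.coe_le_coe_iff, le_inv_mul_iff₀ hc]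
  exact (le_log_iff_exp_le hP).mpr h

theorem limsup_inv_mul_elog_le {P a : ℕ → ℝ} {a₀ : ℝ} (ha : Tendsto a atTop (𝓝 a₀))
    (hP : ∀ᶠ n in atTop, P n ≤ exp (n * a n)) :
    limsup (fun n : ℕ => (((n : ℝ)⁻¹ : ℝ) : EReal) * elog (P n)) atTop ≤ a₀ := by
  rw [← (EReal.tendsto_coe.mpr ha).limsup_eq]
  refine limsup_le_limsup ?_
  filter_upwards [hP, eventually_gt_atTop 0] with n hPn hn
  exact coe_inv_mul_elog_le (Nat.cast_pos.mpr hn) hPn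

theorem le_liminf_inv_mul_elog {P a : ℕ → ℝ} {a₀ : ℝ} (ha : Tendsto a atTop (𝓝 a₀))
    (hP : ∀ᶠ n in atTop, exp (n * a n) ≤ P n) :
    (a₀ : EReal) ≤ liminf (fun n : ℕ => (((n : ℝ)⁻¹ : ℝ) : EReal) * elog (P n)) atTop := by
  rw [← (EReal.tendsto_coe.mpr ha).liminf_eq]
  refine liminf_le_liminf ?_
  filter_upwards [hP, eventually_gt_atTop 0] with n hPn hn
  exact le_coe_inv_mul_elog (Nat.cast_pos.mpr hn) hPn

theorem tendsto_log_succ_div_atTop : Tendsto (fun n : ℕ => log (n + 1) / n) atTop (𝓝 0) := by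
  have h := (tendsto_pow_log_div_mul_add_atTop 1 (-1) 1 one_ne_zero).comp
    (tendsto_atTop_add_const_right atTop 1 tendsto_natCast_atTop_atTop)
  simpa [Function.comp_def] using h

end LogScale

section LargeDeviations

theorem natCast_div_mem_Icc {n s : ℕ} (hs : s ≤ n) : (s / n : ℝ) ∈ Set.Icc 0 1 :=
  ⟨by positivity, div_le_one_of_le₀ (by exact_mod_cast hs) (Nat.cast_nonneg n)⟩

theorem sum_indicator_binomProb_le_exp {μ : ℝ} (hμ : μ ∈ Set.Ioo 0 1) {n : ℕ} (hn : n ≠ 0)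
    {A : Set (Bool → ℝ)} {c : ℝ}
    (hc : ∀ s ≤ n, bern (s / n) ∈ A → c ≤ bernKL μ (s / n)) :
    ∑ s ∈ range (n + 1), A.indicator (fun _ => binomProb μ n s) (bern (s / n)) ≤
      exp (n * (log (n + 1) / n - c)) := by
  have hn' : (n : ℝ) ≠ 0 := Nat.cast_ne_zero.mpr hn
  calc ∑ s ∈ range (n + 1), A.indicator (fun _ => binomProb μ n s) (bern (s / n))
      ≤ ∑ _s ∈ range (n + 1), exp (-(n * c)) := by
        refine sum_le_sum fun s hs => ?_
        have hsn : s ≤ n := Nat.lt_succ_iff.mp (mem_range.mp hs)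
        by_cases hA : bern (s / n) ∈ A
        · rw [Set.indicator_of_mem hA]
          refine (binomProb_le_exp hμ hn hsn).trans (exp_le_exp.mpr ?_)
          exact neg_le_neg (mul_le_mul_of_nonneg_left (hc s hsn hA) (Nat.cast_nonneg n))
        · rw [Set.indicator_of_notMem hA]
          exact (exp_pos _).le
    _ = exp (n * (log (n + 1) / n - c)) := by
        rw [sum_const, card_range, nsmul_eq_mul, mul_sub, mul_div_cancel₀ _ hn', sub_eq_add_neg,
          exp_add, exp_log (by positivity)]
        push_cast
        ring

theorem binomProb_le_sum_indicator {μ : ℝ} (hμ : μ ∈ Set.Ioo 0 1) {n s : ℕ} (hs : s ≤ n)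
    {A : Set (Bool → ℝ)} (hA : bern (s / n) ∈ A) :
    binomProb μ n s ≤
      ∑ s ∈ range (n + 1), A.indicator (fun _ => binomProb μ n s) (bern (s / n)) := by
  rw [← Set.indicator_of_mem hA (fun _ => binomProb μ n s)]
  exact single_le_sum (f := fun s => A.indicator (fun _ => binomProb μ n s) (bern (s / n)))
    (fun s' hs' => Set.indicator_nonneg (fun _ _ =>
      (binomProb_pos hμ (Nat.lt_succ_iff.mp (mem_range.mp hs'))).le) _)
    (mem_range.mpr (Nat.lt_succ_of_le hs))

variable {μ : ℕ → ℝ} {p : ℝ}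

theorem tendsto_abs_log_sub_add_abs_log_sub (hp : p ∈ Set.Ioo 0 1)
    (hμ : Tendsto μ atTop (𝓝 p)) :
    Tendsto (fun n => |log (μ n) - log p| + |log (1 - μ n) - log (1 - p)|) atTop (𝓝 0) := by
  have hcont : ContinuousAt (fun m => |log m - log p| + |log (1 - m) - log (1 - p)|) p := by
    have h1 : (1 - p) ≠ 0 := (sub_pos.mpr hp.2).ne'
    fun_prop (disch := first | exact hp.1.ne' | exact h1)
  simpa [Function.comp_def] using hcont.tendsto.comp hμ

theorem limsup_le_neg_iInf_bernRate (hp : p ∈ Set.Ioo 0 1) (hμ : Tendsto μ atTop (𝓝 p))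
    (A : Set (Bool → ℝ)) :
    limsup (fun n : ℕ => (((n : ℝ)⁻¹ : ℝ) : EReal) * elog (empIndProb (μ n) n A)) atTop ≤
      -⨅ ω ∈ A, bernRate p ω := by
  set δ := fun n => |log (μ n) - log p| + |log (1 - μ n) - log (1 - p)|
  rw [EReal.le_neg, ← EReal.ge_of_forall_gt_iff_ge]
  intro j hj
  rw [EReal.le_neg, ← EReal.coe_neg]
  refine limsup_inv_mul_elog_le (a := fun n => log (n + 1) / n - (j - δ n)) ?_ ?_
  · simpa using tendsto_log_succ_div_atTop.sub
      (tendsto_const_nhds.sub (tendsto_abs_log_sub_add_abs_log_sub hp hμ))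
  filter_upwards [eventually_ne_atTop 0, hμ.eventually (Ioo_mem_nhds hp.1 hp.2)] with n hn hμn
  rw [empIndProb_eq_sum_binomProb hn]
  refine sum_indicator_binomProb_le_exp hμn hn fun s hs hA => ?_
  have hjK : (j : EReal) < bernKL p (s / n) :=
    hj.trans_le ((iInf₂_le _ hA).trans_eq (bernRate_bern hp (natCast_div_mem_Icc hs)))
  have hgap := abs_le.mp (abs_bernKL_sub_bernKL_le (μ := μ n) (p := p) (natCast_div_mem_Icc hs))
  linarith [EReal.coe_lt_coe_iff.mp hjK]

theorem neg_iInf_bernRate_le_liminf (hp : p ∈ Set.Ioo 0 1) (hμ : Tendsto μ atTop (𝓝 p))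
    {G : Set (Bool → ℝ)} (hG : IsOpen G) :
    -(⨅ ω ∈ G, bernRate p ω) ≤
      liminf (fun n : ℕ => (((n : ℝ)⁻¹ : ℝ) : EReal) * elog (empIndProb (μ n) n G)) atTop := by
  rw [EReal.neg_le]
  refine le_iInf₂ fun ω hω => ?_
  rw [EReal.neg_le]
  by_cases hω' : IsProbVec ω
  swap
  · rw [bernRate, if_neg hω', EReal.neg_top]
    exact bot_le
  obtain ⟨t, ht, rfl⟩ := isProbVec_iff_exists_bern.mp hω'
  rw [bernRate_bern hp ht, ← EReal.coe_neg]
  set s : ℕ → ℕ := fun n => ⌊t * n⌋₊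
  have hsn (n : ℕ) : s n ≤ n :=
    Nat.floor_le_of_le (mul_le_of_le_one_left (Nat.cast_nonneg n) ht.2)
  have hs : Tendsto (fun n => (s n / n : ℝ)) atTop (𝓝 t) :=
    (tendsto_nat_floor_mul_div_atTop ht.1).comp tendsto_natCast_atTop_atTop
  set δ := fun n => |log (μ n) - log p| + |log (1 - μ n) - log (1 - p)|
  refine le_liminf_inv_mul_elog
    (a := fun n => -bernKL p (s n / n) - δ n - log (n + 1) / n) ?_ ?_
  · simpa using (((continuous_bernKL p).tendsto t).comp hs).neg.sub
      (tendsto_abs_log_sub_add_abs_log_sub hp hμ) |>.sub tendsto_log_succ_div_atTop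
  filter_upwards [eventually_ne_atTop 0, hμ.eventually (Ioo_mem_nhds hp.1 hp.2),
    ((continuous_bern.tendsto t).comp hs).eventually (hG.mem_nhds hω)] with n hn hμn hsG
  rw [empIndProb_eq_sum_binomProb hn]
  refine le_trans ?_ ((exp_le_binomProb hμn hn (hsn n)).trans
    (binomProb_le_sum_indicator hμn (hsn n) hsG))
  have hgap := abs_le.mp
    (abs_bernKL_sub_bernKL_le (μ := μ n) (p := p) (natCast_div_mem_Icc (hsn n)))
  have hn' : (n : ℝ) ≠ 0 := Nat.cast_ne_zero.mpr hn
  refine exp_le_exp.mpr ?_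
  rw [mul_sub, mul_sub, mul_div_cancel₀ _ hn']
  nlinarith [Nat.cast_nonneg (α := ℝ) n]

theorem isLDP_empIndProb (hp : p ∈ Set.Ioo 0 1) (hμ : Tendsto μ atTop (𝓝 p)) :
    IsLDP (fun n A => empIndProb (μ n) n A) (bernRate p) :=
  ⟨lowerSemicontinuous_bernRate hp, isCompact_setOf_bernRate_le hp,
    fun F _ => limsup_le_neg_iInf_bernRate hp hμ F,
    fun _ hG => neg_iInf_bernRate_le_liminf hp hμ hG⟩

end LargeDeviations

theorem statement3_general
    (μ : ℕ → ℝ)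
    (k : ℕ → ℕ)
    (β : ℝ) (hβ : β ∈ Set.Ioc (0 : ℝ) 1)
    (hβn : Tendsto (fun n => (k n : ℝ) / n) atTop (nhds β))
    (q : Bool → ℝ) (hq : ∀ a, 0 < q a)
    (hq' : ∀ a, Tendsto (fun n : ℕ => (n : ℝ) * bern (μ n) a / (k n)) atTop (nhds (q a))) :
    IsLDP
      (fun n (A : Set (Bool → ℝ)) =>
        ∑ x : Fin n → Bool, A.indicator (fun _ => bernWeight n (μ n) x) (empInd n x))
      (rate3 β q) := by
  have hbern (a : Bool) : Tendsto (fun n => bern (μ n) a) atTop (𝓝 (β * q a)) := by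
    rw [mul_comm]
    refine ((hq' a).mul hβn).congr' ?_
    filter_upwards [hβn.eventually_const_lt hβ.1] with n hn
    have hk0 : (k n : ℝ) ≠ 0 := fun h => by simp [h] at hn
    have hn0 : (n : ℝ) ≠ 0 := fun h => by simp [h] at hn
    field_simp
  have hμ : Tendsto μ atTop (𝓝 (β * q true)) := hbern true
  have hν : (fun a => β * q a) = bern (β * q true) := by
    funext a
    cases a
    · exact tendsto_nhds_unique (hbern false) (tendsto_const_nhds.sub hμ)
    · rfl
  have hp : β * q true ∈ Set.Ioo 0 1 := by
    have h := congrFun hν false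
    simp only [bern, Bool.false_eq_true, ↓reduceIte] at h
    constructor <;> nlinarith [mul_pos hβ.1 (hq true), mul_pos hβ.1 (hq false)]
  have hrate : rate3 β q = bernRate (β * q true) := by
    funext ω
    rw [bernRate, ← hν]
    rfl
  rw [hrate]
  exact isLDP_empIndProb hp hμ

/-- Theorem 2.4: the empirical infection measure `P₁^X` satisfies an LDP with speed `n`
and good rate function `β I^β(ω) = β H(ω/β ∥ q)`. -/
theorem statement3
    (μ : ℕ → ℝ) (hμ : ∀ n, μ n ∈ Set.Icc (0 : ℝ) 1)
    (k : ℕ → ℕ) (hk : Tendsto k atTop atTop)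
    (β : ℝ) (hβ : β ∈ Set.Ioc (0 : ℝ) 1)
    (hβn : Tendsto (fun n => (k n : ℝ) / n) atTop (nhds β))
    (q : Bool → ℝ) (hq : ∀ a, 0 < q a)
    (hq' : ∀ a, Tendsto (fun n : ℕ => (n : ℝ) * bern (μ n) a / (k n)) atTop (nhds (q a))) :
    IsLDP
      (fun n (A : Set (Bool → ℝ)) =>
        ∑ x : Fin n → Bool, A.indicator (fun _ => bernWeight n (μ n) x) (empInd n x))
      (rate3 β q) :=
  statement3_general μ k β hβ hβn q hq hq'

end Pooling
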